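/- arXiv:2106.11350 — 3 statements merged into one kernel-verified Lean document; each statement's English description precedes it below -/
import Mathlib

section
/- Fix continuous matrix functions A(t), B(t), R(t) on [0,1] with B, R symmetric. Let V be the space of solutions (p,x) of ṗ = -Aᵀp + Rx, ẋ = Bp + Ax with x(0) = 0, and W ⊆ V the subspace with additionally x(1) = 0. Define subspaces of ℝⁿ: A₁ := {x(1) : (p,x) ∈ V} and B₁ := {p(1) : (p,x) ∈ W}. Then ℝⁿ = A₁ ⊕ B₁ and B₁ is the orthogonal complement of A₁ with respect to the Euclidean inner product. -/
/-! The time-one solution map `T` of the linear Hamiltonian system is linear and injective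
(existence and uniqueness for linear ODEs), and it preserves the symplectic form
`ω((p, x), (q, y)) = p ⬝ᵥ y - x ⬝ᵥ q`, because for symmetric `B` and `R` the coefficient matrix
`[[-Aᵀ, R], [B, A]]` is skew with respect to `ω`. Writing `Φ p₀ = x(1)` and `Ψ p₀ = p(1)` for the
solution starting at `(p₀, 0)`, we get `A₁ = range Φ` and `B₁ = Ψ (ker Φ)`. For `q₀ ∈ ker Φ`,
conservation of `ω` between the solutions starting at `(q₀, 0)` and `(p₀, 0)` reads
`Ψ q₀ ⬝ᵥ Φ p₀ = 0`, so `B₁ ⊥ A₁`. Injectivity of `T` makes `Ψ` injective on `ker Φ`, hence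
`dim B₁ + dim A₁ = n` by rank–nullity; since the dot product is anisotropic, two orthogonal
subspaces of complementary dimensions are complements and each is the orthogonal of the other. -/

open Matrix Set

/-- A pair `(p, x)` is a solution on `[0,1]` of Hamilton's equation for
Jacobi fields `ṗ = -Aᵀp + Rx, ẋ = Bp + Ax`. -/
def IsJacobiSol (n : ℕ) (A B R : ℝ → Matrix (Fin n) (Fin n) ℝ)
    (p x : ℝ → Fin n → ℝ) : Prop :=
  ∀ t ∈ Icc (0:ℝ) 1,
    HasDerivWithinAt p ((-(A t)ᵀ).mulVec (p t) + (R t).mulVec (x t)) (Icc 0 1) t ∧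
    HasDerivWithinAt x ((B t).mulVec (p t) + (A t).mulVec (x t)) (Icc 0 1) t

/-- `A₁ = {x(1) : (p,x) solution with x(0) = 0}`. -/
def Aone (n : ℕ) (A B R : ℝ → Matrix (Fin n) (Fin n) ℝ) : Set (Fin n → ℝ) :=
  {v | ∃ p x : ℝ → Fin n → ℝ, IsJacobiSol n A B R p x ∧ x 0 = 0 ∧ x 1 = v}

/-- `B₁ = {p(1) : (p,x) solution with x(0) = x(1) = 0}`. -/
def Bone (n : ℕ) (A B R : ℝ → Matrix (Fin n) (Fin n) ℝ) : Set (Fin n → ℝ) :=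
  {w | ∃ p x : ℝ → Fin n → ℝ, IsJacobiSol n A B R p x ∧ x 0 = 0 ∧ x 1 = 0 ∧ p 1 = w}

open scoped NNReal
open Module

section LinearODE

variable {E : Type*} [NormedAddCommGroup E] [NormedSpace ℝ E]
  {v : ℝ → E → E} {f g : ℝ → E} {a b t₀ : ℝ}

theorem IsIntegralCurveOn.hasDerivWithinAt_Ici (hf : IsIntegralCurveOn f v (Icc a b)) {t : ℝ}
    (ht : t ∈ Ico a b) : HasDerivWithinAt f (v t (f t)) (Ici t) t :=
  (hf t (Ico_subset_Icc_self ht)).mono_of_mem_nhdsWithin (Icc_mem_nhdsGE_of_mem ht)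

theorem IsIntegralCurveOn.hasDerivWithinAt_Iic (hf : IsIntegralCurveOn f v (Icc a b)) {t : ℝ}
    (ht : t ∈ Ioc a b) : HasDerivWithinAt f (v t (f t)) (Iic t) t :=
  (hf t (Ioc_subset_Icc_self ht)).mono_of_mem_nhdsWithin (Icc_mem_nhdsLE_of_mem ht)

theorem IsIntegralCurveOn.eqOn_Icc {K : ℝ≥0} (hv : ∀ t ∈ Icc a b, LipschitzWith K (v t))
    (hf : IsIntegralCurveOn f v (Icc a b)) (hg : IsIntegralCurveOn g v (Icc a b))
    (ht₀ : t₀ ∈ Icc a b) (h : f t₀ = g t₀) : EqOn f g (Icc a b) := by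
  have left : EqOn f g (Icc a t₀) :=
    ODE_solution_unique_of_mem_Icc_left (s := fun _ => univ)
      (fun t ht => (hv t (Icc_subset_Icc le_rfl ht₀.2 (Ioc_subset_Icc_self ht))).lipschitzOnWith)
      (hf.continuousOn.mono (Icc_subset_Icc le_rfl ht₀.2))
      (fun t ht => (hf.mono (Icc_subset_Icc le_rfl ht₀.2)).hasDerivWithinAt_Iic ht)
      (fun _ _ => mem_univ _) (hg.continuousOn.mono (Icc_subset_Icc le_rfl ht₀.2))
      (fun t ht => (hg.mono (Icc_subset_Icc le_rfl ht₀.2)).hasDerivWithinAt_Iic ht)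
      (fun _ _ => mem_univ _) h
  have right : EqOn f g (Icc t₀ b) :=
    ODE_solution_unique_of_mem_Icc_right (s := fun _ => univ)
      (fun t ht => (hv t (Icc_subset_Icc ht₀.1 le_rfl (Ico_subset_Icc_self ht))).lipschitzOnWith)
      (hf.continuousOn.mono (Icc_subset_Icc ht₀.1 le_rfl))
      (fun t ht => (hf.mono (Icc_subset_Icc ht₀.1 le_rfl)).hasDerivWithinAt_Ici ht)
      (fun _ _ => mem_univ _) (hg.continuousOn.mono (Icc_subset_Icc ht₀.1 le_rfl))
      (fun t ht => (hg.mono (Icc_subset_Icc ht₀.1 le_rfl)).hasDerivWithinAt_Ici ht)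
      (fun _ _ => mem_univ _) h
  intro t ht
  rcases le_total t t₀ with htt₀ | ht₀t
  · exact left ⟨ht.1, htt₀⟩
  · exact right ⟨ht₀t, ht.2⟩

theorem IsIntegralCurveOn.congr {s : Set ℝ} (hf : IsIntegralCurveOn f v s) (hgf : EqOn g f s) :
    IsIntegralCurveOn g v s := fun t ht => by
  rw [hgf ht]
  exact (hf t ht).congr_of_mem hgf ht

theorem IsIntegralCurveOn.piecewise_Iic {m : ℝ} (ham : a ≤ m) (hmb : m ≤ b)
    (hf : IsIntegralCurveOn f v (Icc a m)) (hg : IsIntegralCurveOn g v (Icc m b))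
    (hfg : f m = g m) :
    IsIntegralCurveOn ((Iic m).piecewise f g) v (Icc a b) := by
  set F := (Iic m).piecewise f g
  have hF₁ : IsIntegralCurveOn F v (Icc a m) :=
    hf.congr fun t ht => piecewise_eq_of_mem _ _ _ (mem_Iic.2 ht.2)
  have hF₂ : IsIntegralCurveOn F v (Icc m b) := hg.congr fun t ht => by
    rcases ht.1.eq_or_lt with rfl | hmt
    · simp [F, hfg]
    · exact piecewise_eq_of_notMem _ _ _ (notMem_Iic.2 hmt)
  intro t ht
  have d₁ : HasDerivWithinAt F (v t (F t)) (Icc a m) t := by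
    by_cases htm : t ≤ m
    · exact hF₁ t ⟨ht.1, htm⟩
    · exact HasFDerivWithinAt.of_notMem_closure (by rw [closure_Icc]; exact fun h => htm h.2)
  have d₂ : HasDerivWithinAt F (v t (F t)) (Icc m b) t := by
    by_cases hmt : m ≤ t
    · exact hF₂ t ⟨hmt, ht.2⟩
    · exact HasFDerivWithinAt.of_notMem_closure (by rw [closure_Icc]; exact fun h => hmt h.1)
  simpa only [Icc_union_Icc_eq_Icc ham hmb] using d₁.union d₂

theorem IsCompact.exists_nnnorm_le_of_continuousOn {α F : Type*} [TopologicalSpace α]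
    [SeminormedAddCommGroup F] {s : Set α} (hs : IsCompact s) {φ : α → F}
    (hφ : ContinuousOn φ s) : ∃ K : ℝ≥0, ∀ x ∈ s, ‖φ x‖₊ ≤ K := by
  obtain ⟨C, hC⟩ := hs.exists_bound_of_continuousOn hφ
  exact ⟨C.toNNReal, fun x hx => by
    rw [← NNReal.coe_le_coe, coe_nnnorm]; exact (hC x hx).trans (Real.le_coe_toNNReal C)⟩

variable {M : ℝ → E →L[ℝ] E}

theorem IsIntegralCurveOn.eqOn_Icc_of_continuousOn (hM : ContinuousOn M (Icc a b))
    (hf : IsIntegralCurveOn f (fun t => M t) (Icc a b))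
    (hg : IsIntegralCurveOn g (fun t => M t) (Icc a b))
    (ht₀ : t₀ ∈ Icc a b) (h : f t₀ = g t₀) : EqOn f g (Icc a b) :=
  let ⟨_, hK⟩ := isCompact_Icc.exists_nnnorm_le_of_continuousOn hM
  hf.eqOn_Icc (fun t ht => (M t).lipschitz.weaken (hK t ht)) hg ht₀ h

theorem IsIntegralCurveOn.add {s : Set ℝ} (hf : IsIntegralCurveOn f (fun t => M t) s)
    (hg : IsIntegralCurveOn g (fun t => M t) s) :
    IsIntegralCurveOn (f + g) (fun t => M t) s := fun t ht => by
  simpa only [Pi.add_apply, map_add] using (hf t ht).add (hg t ht)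

theorem IsIntegralCurveOn.const_smul {s : Set ℝ} (hf : IsIntegralCurveOn f (fun t => M t) s)
    (c : ℝ) : IsIntegralCurveOn (c • f) (fun t => M t) s := fun t ht => by
  simpa only [Pi.smul_apply, map_smul] using (hf t ht).const_smul c

theorem isIntegralCurveOn_zero {s : Set ℝ} : IsIntegralCurveOn (fun _ => 0) (fun t => M t) s :=
  fun t _ => by simpa only [Pi.zero_apply, map_zero] using hasDerivWithinAt_const t s (0 : E)

theorem IsIntegralCurveOn.bilinear_apply_eq_of_skew {F : Type*} [NormedAddCommGroup F]
    [NormedSpace ℝ F] (ω : E →L[ℝ] E →L[ℝ] F)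
    (hω : ∀ t ∈ Icc a b, ∀ z w, ω (M t z) w + ω z (M t w) = 0)
    (hf : IsIntegralCurveOn f (fun t => M t) (Icc a b))
    (hg : IsIntegralCurveOn g (fun t => M t) (Icc a b)) {t : ℝ} (ht : t ∈ Icc a b) :
    ω (f t) (g t) = ω (f a) (g a) := by
  refine constant_of_has_deriv_right_zero
    (fun s hs => (ω.hasDerivWithinAt_of_bilinear (hf s hs) (hg s hs)).continuousWithinAt)
    (fun s hs => ?_) t ht
  convert ω.hasDerivWithinAt_of_bilinear (hf.hasDerivWithinAt_Ici hs) (hg.hasDerivWithinAt_Ici hs)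
    using 1
  rw [add_comm, hω s (Ico_subset_Icc_self hs)]

variable [CompleteSpace E]

theorem exists_isIntegralCurveOn_Icc_of_mul_le {K : ℝ≥0} (hM : ContinuousOn M (Icc a b))
    (hK : ∀ t ∈ Icc a b, ‖M t‖₊ ≤ K) (hab : a ≤ b) (hlen : K * (b - a) ≤ 1 / 2) (z₀ : E) :
    ∃ f, f a = z₀ ∧ IsIntegralCurveOn f (fun t => M t) (Icc a b) := by
  -- On the ball of radius `‖z₀‖ + 1` the field is bounded by `K (2‖z₀‖ + 1)`, and
  -- `K (b - a) ≤ 1 / 2` keeps the solution inside that ball.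
  have hpl : IsPicardLindelof (fun t => M t) (⟨a, left_mem_Icc.2 hab⟩ : Icc a b) z₀
      (‖z₀‖₊ + 1) 0 (K * (2 * ‖z₀‖₊ + 1)) K :=
    { lipschitzOnWith := fun t ht => ((M t).lipschitz.weaken (hK t ht)).lipschitzOnWith
      continuousOn := fun _ _ => hM.clm_apply continuousOn_const
      norm_le := fun t ht z hz => by
        rw [Metric.mem_closedBall, dist_eq_norm] at hz
        have hz' : ‖z‖ ≤ 2 * ‖z₀‖ + 1 := by
          push_cast at hz; linarith [norm_le_norm_add_norm_sub' z z₀]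
        calc ‖M t z‖ ≤ ‖M t‖ * ‖z‖ := (M t).le_opNorm z
          _ ≤ K * (2 * ‖z₀‖ + 1) := mul_le_mul (hK t ht) hz' (norm_nonneg _) K.2
          _ = _ := by push_cast; ring
      mul_max_le := by
        simp only [max_eq_left (sub_nonneg.2 hab), sub_self, NNReal.coe_zero, sub_zero]
        push_cast
        nlinarith [norm_nonneg z₀] }
  exact hpl.exists_eq_forall_mem_Icc_hasDerivWithinAt₀

theorem exists_isIntegralCurveOn_Icc (hM : ContinuousOn M (Icc a b)) (hab : a ≤ b) (z₀ : E) :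
    ∃ f, f a = z₀ ∧ IsIntegralCurveOn f (fun t => M t) (Icc a b) := by
  obtain ⟨K, hK⟩ := isCompact_Icc.exists_nnnorm_le_of_continuousOn hM
  set δ : ℝ := 1 / (2 * (K + 1))
  have hδ : 0 < δ := by positivity
  have short : ∀ c d, a ≤ c → c ≤ d → d ≤ b → d - c ≤ δ → ∀ z : E,
      ∃ f, f c = z ∧ IsIntegralCurveOn f (fun t => M t) (Icc c d) := by
    intro c d hac hcd hdb hlen z
    refine exists_isIntegralCurveOn_Icc_of_mul_le (hM.mono (Icc_subset_Icc hac hdb))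
      (fun t ht => hK t ⟨hac.trans ht.1, ht.2.trans hdb⟩) hcd ?_ z
    calc (K : ℝ) * (d - c) ≤ (K + 1) * δ := by gcongr; linarith
      _ = 1 / 2 := by simp only [δ]; field_simp
  have pieces : ∀ k : ℕ, ∀ c ∈ Icc a b, b - c ≤ k * δ → ∀ z : E,
      ∃ f, f c = z ∧ IsIntegralCurveOn f (fun t => M t) (Icc c b) := by
    intro k
    induction k with
    | zero =>
      intro c hc hlen
      rw [Nat.cast_zero, zero_mul] at hlen
      exact short c b hc.1 hc.2 le_rfl (by linarith)
    | succ k ih =>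
      intro c hc hlen z
      by_cases hcb : b - c ≤ δ
      · exact short c b hc.1 hc.2 le_rfl hcb z
      have hcm : c ≤ c + δ := by linarith
      have hmb : c + δ ≤ b := by linarith
      obtain ⟨f, hfc, hf⟩ := short c (c + δ) hc.1 hcm (by linarith) (by simp) z
      obtain ⟨g, hgm, hg⟩ := ih (c + δ) ⟨by linarith [hc.1], hmb⟩ (by push_cast at hlen; linarith)
        (f (c + δ))
      exact ⟨_, by simp [hcm, hfc], hf.piecewise_Iic hcm hmb hg hgm.symm⟩
  refine pieces ⌈(b - a) / δ⌉₊ a (left_mem_Icc.2 hab) ?_ z₀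
  rw [← div_le_iff₀ hδ]
  exact Nat.le_ceil _

theorem exists_injective_linearMap_isIntegralCurveOn_Icc (hM : ContinuousOn M (Icc a b))
    (hab : a ≤ b) :
    ∃ T : E →ₗ[ℝ] E, Function.Injective T ∧
      ∀ f, IsIntegralCurveOn f (fun t => M t) (Icc a b) → f b = T (f a) := by
  choose S hSa hS using exists_isIntegralCurveOn_Icc hM hab
  have ha : a ∈ Icc a b := left_mem_Icc.2 hab
  have hb : b ∈ Icc a b := right_mem_Icc.2 hab
  have hSb : ∀ f, IsIntegralCurveOn f (fun t => M t) (Icc a b) → f b = S (f a) b :=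
    fun f hf => hf.eqOn_Icc_of_continuousOn hM (hS (f a)) ha (hSa _).symm hb
  let T : E →ₗ[ℝ] E :=
    { toFun := fun z => S z b
      map_add' := fun z w => by simpa [hSa] using (hSb _ ((hS z).add (hS w))).symm
      map_smul' := fun c z => by simpa [hSa] using (hSb _ ((hS z).const_smul c)).symm }
  refine ⟨T, (injective_iff_map_eq_zero T).2 fun z hz => ?_, hSb⟩
  have := (hS z).eqOn_Icc_of_continuousOn hM isIntegralCurveOn_zero hb hz ha
  rwa [hSa] at this

theorem LinearMap.bilinear_map_map_eq_of_skew {F : Type*} [NormedAddCommGroup F]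
    [NormedSpace ℝ F] (hM : ContinuousOn M (Icc a b)) (hab : a ≤ b) (ω : E →L[ℝ] E →L[ℝ] F)
    (hω : ∀ t ∈ Icc a b, ∀ z w, ω (M t z) w + ω z (M t w) = 0) {T : E →ₗ[ℝ] E}
    (hT : ∀ f, IsIntegralCurveOn f (fun t => M t) (Icc a b) → f b = T (f a)) (z w : E) :
    ω (T z) (T w) = ω z w := by
  obtain ⟨f, hfa, hf⟩ := exists_isIntegralCurveOn_Icc hM hab z
  obtain ⟨g, hga, hg⟩ := exists_isIntegralCurveOn_Icc hM hab w
  rw [← hfa, ← hga, ← hT f hf, ← hT g hg]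
  exact hf.bilinear_apply_eq_of_skew ω hω hg (right_mem_Icc.2 hab)

end LinearODE

section Hamiltonian

variable {m : Type*} [Fintype m]

noncomputable def hamiltonianCLM (A B R : Matrix m m ℝ) :
    (m → ℝ) × (m → ℝ) →L[ℝ] (m → ℝ) × (m → ℝ) :=
  LinearMap.toContinuousLinearMap
    (((mulVecLin (-Aᵀ)).coprod (mulVecLin R)).prod ((mulVecLin B).coprod (mulVecLin A)))

@[simp] theorem hamiltonianCLM_apply (A B R : Matrix m m ℝ) (z : (m → ℝ) × (m → ℝ)) :
    hamiltonianCLM A B R z = (-Aᵀ *ᵥ z.1 + R *ᵥ z.2, B *ᵥ z.1 + A *ᵥ z.2) := rfl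

theorem continuous_hamiltonianCLM {X : Type*} [TopologicalSpace X] {A B R : X → Matrix m m ℝ}
    (hA : Continuous A) (hB : Continuous B) (hR : Continuous R) :
    Continuous fun t => hamiltonianCLM (A t) (B t) (R t) :=
  continuous_clm_apply.2 fun z => by
    simp only [hamiltonianCLM_apply]
    fun_prop

variable (m) in
noncomputable def symplecticForm : (m → ℝ) × (m → ℝ) →L[ℝ] (m → ℝ) × (m → ℝ) →L[ℝ] ℝ :=
  LinearMap.toContinuousBilinearMap
    ((dotProductBilin ℝ ℝ).compl₁₂ (LinearMap.fst ℝ _ _) (LinearMap.snd ℝ _ _) -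
      (dotProductBilin ℝ ℝ).compl₁₂ (LinearMap.snd ℝ _ _) (LinearMap.fst ℝ _ _))

@[simp] theorem symplecticForm_apply (z w : (m → ℝ) × (m → ℝ)) :
    symplecticForm m z w = z.1 ⬝ᵥ w.2 - z.2 ⬝ᵥ w.1 := rfl

theorem Matrix.IsSymm.dotProduct_mulVec_comm {α : Type*} [CommSemiring α] {M : Matrix m m α}
    (hM : M.IsSymm) (u w : m → α) :
    u ⬝ᵥ M *ᵥ w = w ⬝ᵥ M *ᵥ u := by
  simpa only [hM.eq] using dotProduct_transpose_mulVec M u w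

theorem symplecticForm_hamiltonianCLM {A B R : Matrix m m ℝ} (hB : B.IsSymm) (hR : R.IsSymm)
    (z w : (m → ℝ) × (m → ℝ)) :
    symplecticForm m (hamiltonianCLM A B R z) w + symplecticForm m z (hamiltonianCLM A B R w)
      = 0 := by
  simp only [symplecticForm_apply, hamiltonianCLM_apply, add_dotProduct, dotProduct_add,
    neg_mulVec, neg_dotProduct, dotProduct_neg]
  rw [dotProduct_comm (Aᵀ *ᵥ z.1), dotProduct_comm (R *ᵥ z.2), dotProduct_comm (B *ᵥ z.1),
    dotProduct_comm (A *ᵥ z.2), dotProduct_transpose_mulVec, dotProduct_transpose_mulVec,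
    hR.dotProduct_mulVec_comm w.2, hB.dotProduct_mulVec_comm w.1]
  ring

theorem map_ker_le_orthogonalBilin_range_of_symplectic
    {T : ((m → ℝ) × (m → ℝ)) →ₗ[ℝ] (m → ℝ) × (m → ℝ)}
    (hT : ∀ z w, symplecticForm m (T z) (T w) = symplecticForm m z w) :
    (LinearMap.ker (LinearMap.snd ℝ _ _ ∘ₗ T ∘ₗ LinearMap.inl ℝ _ _)).map
        (LinearMap.fst ℝ _ _ ∘ₗ T ∘ₗ LinearMap.inl ℝ _ _) ≤
      (LinearMap.range (LinearMap.snd ℝ _ _ ∘ₗ T ∘ₗ LinearMap.inl ℝ _ _)).orthogonalBilin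
        (dotProductBilin ℝ ℝ).flip := by
  rintro _ ⟨q, hq, rfl⟩ _ ⟨p, rfl⟩
  have hq : (T (q, 0)).2 = 0 := hq
  simpa [hq] using hT (q, 0) (p, 0)

end Hamiltonian

section DotProduct

variable {K : Type*} [Field K] [LinearOrder K] [IsStrictOrderedRing K] {m : Type*} [Fintype m]
  {U W : Submodule K (m → K)}

theorem Submodule.disjoint_orthogonalBilin_dotProduct :
    Disjoint (W.orthogonalBilin (dotProductBilin K K).flip) W :=
  Submodule.disjoint_def.2 fun w hw hwW => dotProduct_self_eq_zero.1 (hw w hwW)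

theorem Submodule.eq_orthogonalBilin_dotProduct_of_finrank_add
    (hUW : U ≤ W.orthogonalBilin (dotProductBilin K K).flip)
    (hdim : finrank K U + finrank K W = Fintype.card m) :
    U = W.orthogonalBilin (dotProductBilin K K).flip := by
  refine Submodule.eq_of_le_of_finrank_le hUW ?_
  have hsum :=
    Submodule.finrank_sup_add_finrank_inf_eq (W.orthogonalBilin (dotProductBilin K K).flip) W
  rw [Submodule.disjoint_orthogonalBilin_dotProduct.eq_bot, finrank_bot] at hsum
  have := Submodule.finrank_le (W.orthogonalBilin (dotProductBilin K K).flip ⊔ W)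
  rw [finrank_fintype_fun_eq_card] at this
  omega

theorem Submodule.isCompl_of_le_orthogonalBilin_dotProduct
    (hUW : U ≤ W.orthogonalBilin (dotProductBilin K K).flip)
    (hdim : finrank K U + finrank K W = Fintype.card m) : IsCompl W U :=
  (Submodule.isCompl_iff_disjoint W U (by rw [finrank_fintype_fun_eq_card]; omega)).2
    (Submodule.disjoint_orthogonalBilin_dotProduct.mono_left hUW).symm

end DotProduct

theorem LinearMap.finrank_map_ker_add_finrank_range {K V W W' : Type*} [DivisionRing K]
    [AddCommGroup V] [Module K V] [FiniteDimensional K V] [AddCommGroup W] [Module K W]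
    [AddCommGroup W'] [Module K W'] {Φ : V →ₗ[K] W} {Ψ : V →ₗ[K] W'}
    (h : Disjoint (ker Φ) (ker Ψ)) :
    finrank K ((ker Φ).map Ψ) + finrank K (range Φ) = finrank K V := by
  have hinj : Function.Injective (Ψ.domRestrict (ker Φ)) :=
    (injective_iff_map_eq_zero _).2 fun v hv =>
      Subtype.ext (Submodule.disjoint_def.1 h v v.2 hv)
  rw [← range_domRestrict, finrank_range_of_inj hinj, add_comm]
  exact Φ.finrank_range_add_finrank_ker

theorem LinearMap.disjoint_ker_snd_comp_ker_fst_comp {R V M N : Type*} [Semiring R]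
    [AddCommMonoid V] [Module R V] [AddCommMonoid M] [Module R M] [AddCommMonoid N] [Module R N]
    {S : V →ₗ[R] M × N} (hS : Function.Injective S) :
    Disjoint (ker (snd R M N ∘ₗ S)) (ker (fst R M N ∘ₗ S)) :=
  Submodule.disjoint_def.2 fun v h₂ h₁ =>
    hS <| (Prod.ext (by simpa using h₁) (by simpa using h₂)).trans (map_zero S).symm

section Jacobi

variable {n : ℕ} {A B R : ℝ → Matrix (Fin n) (Fin n) ℝ} {p x : ℝ → Fin n → ℝ}
  {T : ((Fin n → ℝ) × (Fin n → ℝ)) →ₗ[ℝ] (Fin n → ℝ) × (Fin n → ℝ)}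

theorem isJacobiSol_iff_isIntegralCurveOn :
    IsJacobiSol n A B R p x ↔ IsIntegralCurveOn (fun t => (p t, x t))
      (fun t => hamiltonianCLM (A t) (B t) (R t)) (Icc 0 1) :=
  forall₂_congr fun t _ => ⟨fun h => h.1.prodMk h.2, fun h =>
    ⟨(ContinuousLinearMap.fst ℝ (Fin n → ℝ) (Fin n → ℝ)).hasFDerivAt.comp_hasDerivWithinAt t h,
      (ContinuousLinearMap.snd ℝ (Fin n → ℝ) (Fin n → ℝ)).hasFDerivAt.comp_hasDerivWithinAt t h⟩⟩

theorem exists_isJacobiSol (hA : Continuous A) (hB : Continuous B) (hR : Continuous R)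
    (p₀ : Fin n → ℝ) : ∃ p x, IsJacobiSol n A B R p x ∧ p 0 = p₀ ∧ x 0 = 0 := by
  obtain ⟨f, hf0, hf⟩ := exists_isIntegralCurveOn_Icc
    (continuous_hamiltonianCLM hA hB hR).continuousOn zero_le_one (p₀, 0)
  exact ⟨fun t => (f t).1, fun t => (f t).2, isJacobiSol_iff_isIntegralCurveOn.2 hf,
    by simp [hf0], by simp [hf0]⟩

theorem IsJacobiSol.prodMk_one_eq
    (hT : ∀ f, IsIntegralCurveOn f (fun t => hamiltonianCLM (A t) (B t) (R t)) (Icc 0 1) →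
      f 1 = T (f 0))
    (h : IsJacobiSol n A B R p x) : (p 1, x 1) = T (p 0, x 0) :=
  hT _ (isJacobiSol_iff_isIntegralCurveOn.1 h)

theorem aone_eq_range (hA : Continuous A) (hB : Continuous B) (hR : Continuous R)
    (hT : ∀ f, IsIntegralCurveOn f (fun t => hamiltonianCLM (A t) (B t) (R t)) (Icc 0 1) →
      f 1 = T (f 0)) :
    Aone n A B R = LinearMap.range (LinearMap.snd ℝ _ _ ∘ₗ T ∘ₗ LinearMap.inl ℝ _ _) := by
  ext v
  constructor
  · rintro ⟨p, x, h, hx0, rfl⟩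
    have hT1 := h.prodMk_one_eq hT
    rw [hx0] at hT1
    exact ⟨p 0, by simp [← hT1]⟩
  · rintro ⟨p₀, rfl⟩
    obtain ⟨p, x, h, hp0, hx0⟩ := exists_isJacobiSol hA hB hR p₀
    have hT1 := h.prodMk_one_eq hT
    rw [hp0, hx0] at hT1
    exact ⟨p, x, h, hx0, by simp [← hT1]⟩

theorem bone_eq_map_ker (hA : Continuous A) (hB : Continuous B) (hR : Continuous R)
    (hT : ∀ f, IsIntegralCurveOn f (fun t => hamiltonianCLM (A t) (B t) (R t)) (Icc 0 1) →
      f 1 = T (f 0)) :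
    Bone n A B R = (LinearMap.ker (LinearMap.snd ℝ _ _ ∘ₗ T ∘ₗ LinearMap.inl ℝ _ _)).map
      (LinearMap.fst ℝ _ _ ∘ₗ T ∘ₗ LinearMap.inl ℝ _ _) := by
  ext w
  constructor
  · rintro ⟨p, x, h, hx0, hx1, rfl⟩
    have hT1 := h.prodMk_one_eq hT
    rw [hx0] at hT1
    exact ⟨p 0, by simp [← hT1, hx1], by simp [← hT1]⟩
  · rintro ⟨p₀, hp₀, rfl⟩
    obtain ⟨p, x, h, hp0, hx0⟩ := exists_isJacobiSol hA hB hR p₀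
    have hT1 := h.prodMk_one_eq hT
    rw [hp0, hx0] at hT1
    exact ⟨p, x, h, hx0, by simpa [← hT1] using hp₀, by simp [← hT1]⟩

end Jacobi

/-- Orthogonal decomposition `ℝⁿ = A₁ ⊕ B₁`, with `B₁` the Euclidean orthogonal
complement of `A₁`. -/
theorem stmt_2 {n : ℕ} (A B R : ℝ → Matrix (Fin n) (Fin n) ℝ)
    (hA : Continuous A) (hB : Continuous B) (hR : Continuous R)
    (hBsymm : ∀ t, (B t).IsSymm) (hRsymm : ∀ t, (R t).IsSymm) :
    (∀ v : Fin n → ℝ, ∃ a ∈ Aone n A B R, ∃ b ∈ Bone n A B R, v = a + b) ∧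
    Bone n A B R = {w | ∀ a ∈ Aone n A B R, w ⬝ᵥ a = 0} := by
  have hH := (continuous_hamiltonianCLM hA hB hR).continuousOn (s := Icc 0 1)
  obtain ⟨T, hTinj, hT⟩ := exists_injective_linearMap_isIntegralCurveOn_Icc hH zero_le_one
  have hdim := LinearMap.finrank_map_ker_add_finrank_range
    (LinearMap.disjoint_ker_snd_comp_ker_fst_comp (S := T ∘ₗ LinearMap.inl ℝ _ _)
      (hTinj.comp LinearMap.inl_injective))
  rw [finrank_fintype_fun_eq_card] at hdim
  have horth := map_ker_le_orthogonalBilin_range_of_symplectic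
    (LinearMap.bilinear_map_map_eq_of_skew hH zero_le_one _
      (fun t _ => symplecticForm_hamiltonianCLM (hBsymm t) (hRsymm t)) hT)
  rw [aone_eq_range hA hB hR hT, bone_eq_map_ker hA hB hR hT]
  refine ⟨fun v => ?_, ?_⟩
  · obtain ⟨a, b, ha, hb, rfl⟩ := Submodule.codisjoint_iff_exists_add_eq.1
      (Submodule.isCompl_of_le_orthogonalBilin_dotProduct horth hdim).codisjoint v
    exact ⟨a, ha, b, hb, rfl⟩
  · rw [Submodule.eq_orthogonalBilin_dotProduct_of_finrank_add horth hdim]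
    rfl
end

section
/- Every conjugate vector λ₀ ∈ T*_p(ℍ) with H(λ₀) ≠ 0 of the Heisenberg exponential map has order exactly one, i.e. dim Ker(d_{λ₀} exp_p) = 1. -/
/-!
In real coordinates `exp_p (u, v, α)` is a polynomial in `u, v, x₀, y₀` with coefficients
`sin α`, `cos α`, `sinc α`, `versinc α = (1 - cos α) / α` and `(sin α - α) / α²`; the last three
are difference quotients of analytic functions, hence differentiable, and the Jacobian can be
written down. As the differential is not injective, it suffices to find two independent vectors
in its range. The horizontal derivatives act on the first two coordinates as multiplication by
`sinc α + i versinc α`, which vanishes only for `α ∈ 2πℤ \ {0}`. There the Jacobian is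
`[[0, 0, c₁], [0, 0, c₂], [c₁, c₂, *]]` with `α c = (u - α y₀ / 2, v + α x₀ / 2)`, and `c ≠ 0`
is exactly `H(λ₀) ≠ 0`; then `(0, 0, 1)` and `(c₁, c₂, 0)` have independent images.
-/

open Real Module

/-- The sub-Riemannian exponential map of the 3-dimensional Heisenberg group at
the base point `p = (x₀, y₀, τ₀)`, applied to the covector `λ = (u, v, α)`. -/
noncomputable def heisExp (x₀ y₀ τ₀ : ℝ) (lam : ℝ × ℝ × ℝ) : ℝ × ℝ × ℝ :=
  let u := lam.1; let v := lam.2.1; let α := lam.2.2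
  let z₀ : ℂ := ⟨x₀, y₀⟩
  let w₀ : ℂ := ⟨u, v⟩
  if α = 0 then (x₀ + u, y₀ + v, τ₀ + (x₀ * v - y₀ * u) / 2)
  else
    let z1 : ℂ := w₀ / (Complex.I * α) * (Complex.exp (Complex.I * α) - 1)
      + z₀ / 2 * (Complex.exp (Complex.I * α) + 1)
    (z1.re, z1.im,
      τ₀ + ((starRingEnd ℂ) z₀ * w₀).im / 2
        + ((starRingEnd ℂ) z₀ * w₀).re * (1 - Real.cos α) / (2 * α)
        + ‖z₀‖^2 * (α + Real.sin α) / 8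
        + ‖w₀‖^2 * (α - Real.sin α) / (2 * α^2))

section DSlope

variable {𝕜 E : Type*} [NontriviallyNormedField 𝕜] [NormedAddCommGroup E] [NormedSpace 𝕜 E]
  {a : 𝕜}

theorem AnalyticAt.dslope {f : 𝕜 → E} (hf : AnalyticAt 𝕜 f a) : AnalyticAt 𝕜 (dslope f a) a :=
  let ⟨_, hp⟩ := hf
  hp.has_fpower_series_dslope_fslope.analyticAt

theorem Differentiable.dslope {f : 𝕜 → E} (hf : Differentiable 𝕜 f) (ha : AnalyticAt 𝕜 f a) :
    Differentiable 𝕜 (dslope f a) := fun b => by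
  rcases eq_or_ne b a with rfl | hb
  · exact ha.dslope.differentiableAt
  · exact (differentiableAt_dslope_of_ne hb).2 (hf b)

theorem hasDerivAt_dslope_of_ne {f : 𝕜 → 𝕜} {f' b : 𝕜} (hf : HasDerivAt f f' b) (hb : b ≠ a) :
    HasDerivAt (dslope f a) ((f' * (b - a) - (f b - f a)) / (b - a) ^ 2) b := by
  have hslope : (fun z => (f z - f a) / (z - a)) =ᶠ[nhds b] dslope f a := by
    filter_upwards [isOpen_ne.mem_nhds hb] with z hz
    rw [dslope_of_ne f hz, slope_def_field]
  have hquot := (hf.sub_const (f a)).div ((hasDerivAt_id b).sub_const a) (sub_ne_zero.2 hb)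
  simpa using hquot.congr_of_eventuallyEq hslope.symm

end DSlope

theorem finrank_ker_eq_one_of_linearIndependent {K V W ι : Type*} [Field K]
    [AddCommGroup V] [Module K V] [FiniteDimensional K V] [AddCommGroup W] [Module K W]
    [Fintype ι] {L : V →ₗ[K] W} (hL : ¬Function.Injective L) {w : ι → W}
    (hw : LinearIndependent K w) (hwL : ∀ i, w i ∈ LinearMap.range L)
    (hdim : finrank K V = Fintype.card ι + 1) :
    finrank K (LinearMap.ker L) = 1 := by
  have hrange : Fintype.card ι ≤ finrank K (LinearMap.range L) := by
    rw [← finrank_span_eq_card hw]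
    exact Submodule.finrank_mono (Submodule.span_le.2 (Set.range_subset_iff.2 hwL))
  have hker : 1 ≤ finrank K (LinearMap.ker L) :=
    Submodule.one_le_finrank_iff.2 fun h => hL (LinearMap.ker_eq_bot.1 h)
  have := L.finrank_range_add_finrank_ker
  omega

noncomputable def versinc : ℝ → ℝ := dslope (fun t => 1 - cos t) 0

theorem versinc_of_ne_zero {α : ℝ} (hα : α ≠ 0) : versinc α = (1 - cos α) / α := by
  simp [versinc, dslope_of_ne _ hα, slope_def_field]

theorem versinc_zero : versinc 0 = 0 := by
  simp [versinc, dslope_same]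

theorem dslope_sinc_zero : dslope sinc 0 0 = 0 := by
  have heven : deriv sinc 0 = -deriv sinc 0 := by
    simpa [sinc_neg] using deriv_comp_neg (f := sinc) (x := (0 : ℝ))
  rw [dslope_same]
  linarith

theorem dslope_sinc_of_ne_zero {α : ℝ} (hα : α ≠ 0) : dslope sinc 0 α = (sin α - α) / α ^ 2 := by
  rw [dslope_of_ne _ hα, slope_def_field, sinc_of_ne_zero hα, sinc_zero]
  field_simp
  ring

theorem hasDerivAt_sinc_of_ne_zero {α : ℝ} (hα : α ≠ 0) :
    HasDerivAt sinc ((α * cos α - sin α) / α ^ 2) α := by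
  simpa [sinc_eq_dslope, mul_comm] using hasDerivAt_dslope_of_ne (hasDerivAt_sin α) hα

theorem hasDerivAt_versinc_of_ne_zero {α : ℝ} (hα : α ≠ 0) :
    HasDerivAt versinc ((α * sin α - (1 - cos α)) / α ^ 2) α := by
  simpa [versinc, mul_comm] using
    hasDerivAt_dslope_of_ne ((hasDerivAt_cos α).const_sub 1) hα

theorem analyticAt_sinc_zero : AnalyticAt ℝ sinc 0 := sinc_eq_dslope ▸ analyticAt_sin.dslope

theorem differentiable_sinc : Differentiable ℝ sinc :=
  sinc_eq_dslope ▸ differentiable_sin.dslope analyticAt_sin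

theorem differentiable_versinc : Differentiable ℝ versinc :=
  Differentiable.dslope (by fun_prop) (by fun_prop)

theorem differentiable_dslope_sinc : Differentiable ℝ (dslope sinc 0) :=
  differentiable_sinc.dslope analyticAt_sinc_zero

theorem sinc_sq_add_versinc_sq_ne_zero {α : ℝ} (h : ¬(α ≠ 0 ∧ cos α = 1)) :
    sinc α ^ 2 + versinc α ^ 2 ≠ 0 := by
  rcases eq_or_ne α 0 with rfl | hα
  · simp [versinc_zero]
  · have hcos : cos α ≠ 1 := fun hc => h ⟨hα, hc⟩
    rw [sinc_of_ne_zero hα, versinc_of_ne_zero hα, div_pow, div_pow, ← add_div,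
      show sin α ^ 2 + (1 - cos α) ^ 2 = 2 * (1 - cos α) by nlinarith [sin_sq_add_cos_sq α]]
    exact div_ne_zero (mul_ne_zero two_ne_zero (sub_ne_zero.2 hcos.symm)) (pow_ne_zero 2 hα)

theorem heisExp_apply (x₀ y₀ τ₀ u v α : ℝ) :
    heisExp x₀ y₀ τ₀ (u, v, α) =
      (u * sinc α - v * versinc α + (x₀ * (1 + cos α) - y₀ * sin α) / 2,
       u * versinc α + v * sinc α + (y₀ * (1 + cos α) + x₀ * sin α) / 2,
       τ₀ + (x₀ * v - y₀ * u) / 2 + (x₀ * u + y₀ * v) * versinc α / 2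
         + (x₀ ^ 2 + y₀ ^ 2) * (α + sin α) / 8 - (u ^ 2 + v ^ 2) * dslope sinc 0 α / 2) := by
  rcases eq_or_ne α 0 with rfl | hα
  · simp only [heisExp, if_pos, sinc_zero, versinc_zero, dslope_sinc_zero, cos_zero, sin_zero]
    ext <;> ring
  · have hexp : Complex.exp (Complex.I * α) = ⟨cos α, sin α⟩ := by
      rw [mul_comm, Complex.exp_mul_I]
      apply Complex.ext <;> simp [Complex.cos_ofReal_re, Complex.sin_ofReal_re]
    simp only [heisExp, if_neg hα, hexp, sinc_of_ne_zero hα, versinc_of_ne_zero hα,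
      dslope_sinc_of_ne_zero hα]
    ext <;> simp [Complex.div_re, Complex.div_im, Complex.mul_re, Complex.mul_im, Complex.sq_norm,
      Complex.normSq_mk] <;> field_simp <;> ring

theorem fderiv_heisExp_apply (x₀ y₀ τ₀ u v α a b c : ℝ) :
    fderiv ℝ (heisExp x₀ y₀ τ₀) (u, v, α) (a, b, c) =
      (a * sinc α - b * versinc α
          + c * (u * deriv sinc α - v * deriv versinc α - (x₀ * sin α + y₀ * cos α) / 2),
       a * versinc α + b * sinc α
          + c * (u * deriv versinc α + v * deriv sinc α + (x₀ * cos α - y₀ * sin α) / 2),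
       a * (-y₀ / 2 + x₀ * versinc α / 2 - u * dslope sinc 0 α)
          + b * (x₀ / 2 + y₀ * versinc α / 2 - v * dslope sinc 0 α)
          + c * ((x₀ * u + y₀ * v) * deriv versinc α / 2 + (x₀ ^ 2 + y₀ ^ 2) * (1 + cos α) / 8
            - (u ^ 2 + v ^ 2) * deriv (dslope sinc 0) α / 2)) := by
  set p : ℝ × ℝ × ℝ := (u, v, α)
  have hu : HasFDerivAt (𝕜 := ℝ) (fun q : ℝ × ℝ × ℝ => q.1) _ p := hasFDerivAt_fst
  have hv : HasFDerivAt (𝕜 := ℝ) (fun q : ℝ × ℝ × ℝ => q.2.1) _ p := hasFDerivAt_snd.fst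
  have hα : HasFDerivAt (𝕜 := ℝ) (fun q : ℝ × ℝ × ℝ => q.2.2) _ p := hasFDerivAt_snd.snd
  have hS := (differentiable_sinc α).hasDerivAt.comp_hasFDerivAt p hα
  have hV := (differentiable_versinc α).hasDerivAt.comp_hasFDerivAt p hα
  have hD := (differentiable_dslope_sinc α).hasDerivAt.comp_hasFDerivAt p hα
  have hsin := (hasDerivAt_sin α).comp_hasFDerivAt p hα
  have hcos := (hasDerivAt_cos α).comp_hasFDerivAt p hα
  have h₁ := ((hu.mul hS).sub (hv.mul hV)).add
    ((((hcos.const_add 1).const_mul x₀).sub (hsin.const_mul y₀)).mul_const (1 / 2))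
  have h₂ := ((hu.mul hV).add (hv.mul hS)).add
    ((((hcos.const_add 1).const_mul y₀).add (hsin.const_mul x₀)).mul_const (1 / 2))
  have h₃ := (((((hv.const_mul x₀).sub (hu.const_mul y₀)).mul_const (1 / 2)).const_add τ₀).add
    ((((hu.const_mul x₀).add (hv.const_mul y₀)).mul hV).mul_const (1 / 2))).add
    (((hα.add hsin).const_mul (x₀ ^ 2 + y₀ ^ 2)).mul_const (1 / 8)) |>.sub
    ((((hu.pow 2).add (hv.pow 2)).mul hD).mul_const (1 / 2))
  have hF : HasFDerivAt (heisExp x₀ y₀ τ₀) _ p :=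
    (h₁.prodMk (h₂.prodMk h₃)).congr_of_eventuallyEq (.of_forall fun q => by
      obtain ⟨u', v', α'⟩ := q
      rw [heisExp_apply]
      ext <;> simp only [Pi.add_apply, Pi.sub_apply, Pi.mul_apply, Function.comp] <;> ring)
  rw [hF.fderiv]
  simp only [p, ContinuousLinearMap.prod_apply, add_apply, sub_apply, smul_apply,
    ContinuousLinearMap.comp_apply, ContinuousLinearMap.coe_fst', ContinuousLinearMap.coe_snd',
    Function.comp, Pi.add_apply, smul_eq_mul, nsmul_eq_mul]
  ext <;> ring

section

variable (x₀ y₀ τ₀ : ℝ) {u v α : ℝ}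

theorem linearIndependent_fderiv_heisExp_horizontal (h : sinc α ^ 2 + versinc α ^ 2 ≠ 0) :
    LinearIndependent ℝ ![fderiv ℝ (heisExp x₀ y₀ τ₀) (u, v, α) (1, 0, 0),
      fderiv ℝ (heisExp x₀ y₀ τ₀) (u, v, α) (0, 1, 0)] := by
  refine LinearIndependent.pair_iff.2 fun s t hst => ?_
  simp only [fderiv_heisExp_apply, Prod.smul_mk, Prod.mk_add_mk, Prod.mk_eq_zero,
    smul_eq_mul] at hst
  obtain ⟨h₁, h₂, -⟩ := hst
  have hs : s * (sinc α ^ 2 + versinc α ^ 2) = 0 := by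
    linear_combination sinc α * h₁ + versinc α * h₂
  have ht : t * (sinc α ^ 2 + versinc α ^ 2) = 0 := by
    linear_combination sinc α * h₂ - versinc α * h₁
  exact ⟨(mul_eq_zero.1 hs).resolve_right h, (mul_eq_zero.1 ht).resolve_right h⟩

theorem linearIndependent_fderiv_heisExp_of_cos_eq_one (hα : α ≠ 0) (hcos : cos α = 1)
    (hH : (u - α * y₀ / 2) ^ 2 + (v + α * x₀ / 2) ^ 2 ≠ 0) :
    LinearIndependent ℝ ![fderiv ℝ (heisExp x₀ y₀ τ₀) (u, v, α) (0, 0, 1),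
      fderiv ℝ (heisExp x₀ y₀ τ₀) (u, v, α) (u - α * y₀ / 2, v + α * x₀ / 2, 0)] := by
  have hsin : sin α = 0 := by nlinarith [sin_sq_add_cos_sq α]
  have hS : sinc α = 0 := by rw [sinc_of_ne_zero hα, hsin, zero_div]
  have hV : versinc α = 0 := by rw [versinc_of_ne_zero hα, hcos, sub_self, zero_div]
  have hD : dslope sinc 0 α = -1 / α := by rw [dslope_sinc_of_ne_zero hα, hsin]; field_simp; ring
  have hS' : deriv sinc α = 1 / α := by
    rw [(hasDerivAt_sinc_of_ne_zero hα).deriv, hsin, hcos]; field_simp; ring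
  have hV' : deriv versinc α = 0 := by
    rw [(hasDerivAt_versinc_of_ne_zero hα).deriv, hsin, hcos]; simp
  refine LinearIndependent.pair_iff.2 fun s t hst => ?_
  simp only [fderiv_heisExp_apply, hS, hV, hD, hS', hV', hsin, hcos, Prod.smul_mk,
    Prod.mk_add_mk, Prod.mk_eq_zero, smul_eq_mul] at hst
  obtain ⟨h₁, h₂, h₃⟩ := hst
  have hs : s * ((u - α * y₀ / 2) ^ 2 + (v + α * x₀ / 2) ^ 2) = 0 := by
    linear_combination (norm := (field_simp; ring))
      (u - α * y₀ / 2) * α * h₁ + (v + α * x₀ / 2) * α * h₂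
  obtain rfl : s = 0 := (mul_eq_zero.1 hs).resolve_right hH
  have ht : t * ((u - α * y₀ / 2) ^ 2 + (v + α * x₀ / 2) ^ 2) = 0 := by
    linear_combination (norm := (field_simp; ring)) α * h₃
  exact ⟨rfl, (mul_eq_zero.1 ht).resolve_right hH⟩

end

/-- Every conjugate vector `λ₀` with `H(λ₀) ≠ 0` of the Heisenberg exponential
map has order exactly one: `dim Ker(d_{λ₀} exp_p) = 1`. -/
theorem stmt_13 (x₀ y₀ τ₀ u₀ v₀ α₀ : ℝ)
    (hH : (1/2) * ((v₀ + α₀ * x₀ / 2)^2 + (u₀ - α₀ * y₀ / 2)^2) ≠ 0)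
    (hconj : ¬ Function.Injective (fderiv ℝ (heisExp x₀ y₀ τ₀) (u₀, v₀, α₀))) :
    Module.finrank ℝ
      (LinearMap.ker (fderiv ℝ (heisExp x₀ y₀ τ₀) (u₀, v₀, α₀) : ℝ × ℝ × ℝ →ₗ[ℝ] ℝ × ℝ × ℝ)) = 1 := by
  set L := fderiv ℝ (heisExp x₀ y₀ τ₀) (u₀, v₀, α₀)
  have hdim : finrank ℝ (ℝ × ℝ × ℝ) = Fintype.card (Fin 2) + 1 := by simp
  have hrange (a b : ℝ × ℝ × ℝ) : ∀ i, ![L a, L b] i ∈ LinearMap.range (L : _ →ₗ[ℝ] _) :=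
    Fin.forall_fin_two.2 ⟨⟨a, rfl⟩, ⟨b, rfl⟩⟩
  by_cases hα : α₀ ≠ 0 ∧ cos α₀ = 1
  · refine finrank_ker_eq_one_of_linearIndependent hconj
      (linearIndependent_fderiv_heisExp_of_cos_eq_one x₀ y₀ τ₀ hα.1 hα.2 ?_) (hrange _ _) hdim
    contrapose! hH
    linear_combination hH / 2
  · exact finrank_ker_eq_one_of_linearIndependent hconj
      (linearIndependent_fderiv_heisExp_horizontal x₀ y₀ τ₀ (sinc_sq_add_versinc_sq_ne_zero hα))
      (hrange _ _) hdim
end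

section
/- Consider the linear system on ℝ³ ⊕ ℝ³ given by the Heisenberg Jacobi equation in the standard coordinate frame. The solution with initial condition (p(0), x(0)) is (p(t), x(t)) = M(t)(p(0), x(0)), where the block of M(t) mapping x-initial conditions to x(t) (i.e. with p(0)=0, restricted to the first two x-coordinates) is [[ (1+cos(α₀t))/2, −sin(α₀t)/2 ],[ sin(α₀t)/2, (1+cos(α₀t))/2 ]]; its determinant equals (1+cos(α₀t))/2, hence it is invertible iff α₀t is not an odd multiple of π. -/
/-!
The vertical covector component `p₂` has zero derivative along the Jacobi flow, so it stays `0`,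
and the horizontal components decouple. In the complex coordinates `z = x₀ + i x₁`,
`w = p₀ + i p₁` they satisfy the constant-coefficient system `z' = w + iα₀z/2`,
`w' = iα₀w/2 − α₀²z/4`; its solution with `w(0) = 0` is
`z(t) = (1 + e^{iα₀t})/2 · z(0)`, `w(t) = iα₀(e^{iα₀t} − 1)/4 · z(0)`, and uniqueness for
Lipschitz ODEs identifies it with the given one. The block is thus multiplication by
`(1 + e^{iα₀t})/2`, whose determinant `|(1 + e^{iα₀t})/2|² = (1 + cos α₀t)/2` vanishes exactly
when `α₀t` is an odd multiple of `π`.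
-/

open Matrix Real

section Complex

open Complex

noncomputable def horizontal (v : Fin 3 → ℝ) : ℂ := v 0 + v 1 * I

theorem horizontal_eq_mul_iff {v w : Fin 3 → ℝ} {θ : ℝ} :
    horizontal v = (1 + exp (θ * I)) / 2 * horizontal w ↔
      v 0 = (1 + Real.cos θ) / 2 * w 0 + -Real.sin θ / 2 * w 1 ∧
      v 1 = Real.sin θ / 2 * w 0 + (1 + Real.cos θ) / 2 * w 1 := by
  rw [Complex.ext_iff]
  simp only [horizontal, add_re, add_im, mul_re, mul_im, ofReal_re, ofReal_im, I_re, I_im,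
    one_re, one_im, div_ofNat_re, div_ofNat_im, exp_ofReal_mul_I_re, exp_ofReal_mul_I_im]
  ring_nf

noncomputable def horizontalJacobi (α : ℝ) : ℂ × ℂ →L[ℂ] ℂ × ℂ :=
  ((α / 2 * I) • ContinuousLinearMap.fst ℂ ℂ ℂ + ContinuousLinearMap.snd ℂ ℂ ℂ).prod
    ((-(α ^ 2 / 4) : ℂ) • ContinuousLinearMap.fst ℂ ℂ ℂ
      + (α / 2 * I) • ContinuousLinearMap.snd ℂ ℂ ℂ)

@[simp]
theorem horizontalJacobi_apply (α : ℝ) (z w : ℂ) :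
    horizontalJacobi α (z, w) = (α / 2 * I * z + w, -(α ^ 2 / 4) * z + α / 2 * I * w) :=
  rfl

noncomputable def horizontalJacobiSolution (α : ℝ) (z₀ : ℂ) (t : ℝ) : ℂ × ℂ :=
  ((1 + exp (↑(α * t) * I)) / 2 * z₀, α * I / 4 * (exp (↑(α * t) * I) - 1) * z₀)

theorem hasDerivAt_horizontalJacobiSolution (α : ℝ) (z₀ : ℂ) (t : ℝ) :
    HasDerivAt (horizontalJacobiSolution α z₀)
      (horizontalJacobi α (horizontalJacobiSolution α z₀ t)) t := by
  have hexp : HasDerivAt (fun s : ℝ => exp (↑(α * s) * I)) (exp (↑(α * t) * I) * (α * I)) t := by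
    simpa using (((hasDerivAt_id t).const_mul α).ofReal_comp.mul_const I).cexp
  refine ((((hexp.const_add 1).div_const 2).mul_const z₀).prodMk
    (((hexp.sub_const 1).const_mul (α * I / 4)).mul_const z₀)).congr_deriv ?_
  simp only [horizontalJacobiSolution, horizontalJacobi_apply]
  exact Prod.ext (by ring)
    (by linear_combination (α ^ 2 / 8 * (exp (↑(α * t) * I) + 1) * z₀) * I_sq)

theorem eq_horizontalJacobiSolution {α : ℝ} {z₀ : ℂ} {f : ℝ → ℂ × ℂ}
    (hf : ∀ t, HasDerivAt f (horizontalJacobi α (f t)) t) (hf0 : f 0 = (z₀, 0)) :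
    f = horizontalJacobiSolution α z₀ :=
  ODE_solution_unique_univ (v := fun _ => horizontalJacobi α) (s := fun _ => Set.univ) (t₀ := 0)
    (fun _ => (horizontalJacobi α).lipschitz.lipschitzOnWith)
    (fun t => ⟨hf t, trivial⟩) (fun t => ⟨hasDerivAt_horizontalJacobiSolution α z₀ t, trivial⟩)
    (by simp [hf0, horizontalJacobiSolution])

end Complex

section Jacobi

variable {α : ℝ} {A B : ℝ → Matrix (Fin 3) (Fin 3) ℝ} {R : Matrix (Fin 3) (Fin 3) ℝ}
  {p x : ℝ → Fin 3 → ℝ}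

theorem jacobi_p_two_eq_zero
    (hA : ∀ t, ∃ a b : ℝ, A t = !![0, -α/2, 0; α/2, 0, 0; a, b, 0])
    (hR : R = !![-α^2/4, 0, 0; 0, -α^2/4, 0; 0, 0, 0])
    (hp : ∀ (t : ℝ) (i : Fin 3), HasDerivAt (fun s => p s i)
      (((-(A t)ᵀ).mulVec (p t) + R.mulVec (x t)) i) t)
    (hp0 : p 0 = 0) (t : ℝ) : p t 2 = 0 := by
  have hderiv : ∀ s, HasDerivAt (fun s => p s 2) 0 s := by
    intro s
    obtain ⟨a, b, hAs⟩ := hA s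
    simpa [hAs, hR, mulVec, dotProduct, Fin.sum_univ_three] using hp s 2
  simpa [hp0] using is_const_of_deriv_eq_zero (fun s => (hderiv s).differentiableAt)
    (fun s => (hderiv s).deriv) t 0

theorem hasDerivAt_horizontal
    (hA : ∀ t, ∃ a b : ℝ, A t = !![0, -α/2, 0; α/2, 0, 0; a, b, 0])
    (hB : ∀ t, ∃ c d e f g : ℝ, B t = !![1, 0, c; 0, 1, d; e, f, g])
    (hR : R = !![-α^2/4, 0, 0; 0, -α^2/4, 0; 0, 0, 0])
    (hp : ∀ (t : ℝ) (i : Fin 3), HasDerivAt (fun s => p s i)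
      (((-(A t)ᵀ).mulVec (p t) + R.mulVec (x t)) i) t)
    (hx : ∀ (t : ℝ) (i : Fin 3), HasDerivAt (fun s => x s i)
      (((B t).mulVec (p t) + (A t).mulVec (x t)) i) t)
    (hp2 : ∀ t, p t 2 = 0) (t : ℝ) :
    HasDerivAt (fun s => (horizontal (x s), horizontal (p s)))
      (horizontalJacobi α (horizontal (x t), horizontal (p t))) t := by
  obtain ⟨a, b, hAt⟩ := hA t
  obtain ⟨c, d, e, f, g, hBt⟩ := hB t
  have hdx0 : HasDerivAt (fun s => x s 0) (p t 0 - α / 2 * x t 1) t := by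
    simpa [hAt, hBt, hp2, mulVec, dotProduct, Fin.sum_univ_three, sub_eq_add_neg, neg_div]
      using hx t 0
  have hdx1 : HasDerivAt (fun s => x s 1) (p t 1 + α / 2 * x t 0) t := by
    simpa [hAt, hBt, hp2, mulVec, dotProduct, Fin.sum_univ_three] using hx t 1
  have hdp0 : HasDerivAt (fun s => p s 0) (-(α / 2 * p t 1) - α ^ 2 / 4 * x t 0) t := by
    simpa [hAt, hR, hp2, mulVec, dotProduct, Fin.sum_univ_three, sub_eq_add_neg, neg_div]
      using hp t 0
  have hdp1 : HasDerivAt (fun s => p s 1) (α / 2 * p t 0 - α ^ 2 / 4 * x t 1) t := by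
    simpa [hAt, hR, hp2, mulVec, dotProduct, Fin.sum_univ_three, sub_eq_add_neg, neg_div]
      using hp t 1
  refine ((hdx0.ofReal_comp.add (hdx1.ofReal_comp.mul_const Complex.I)).prodMk
    (hdp0.ofReal_comp.add (hdp1.ofReal_comp.mul_const Complex.I))).congr_deriv (Prod.ext ?_ ?_)
  · simp only [horizontal, horizontalJacobi_apply]
    push_cast
    linear_combination (-(α / 2 * x t 1) : ℂ) * Complex.I_sq
  · simp only [horizontal, horizontalJacobi_apply]
    push_cast
    linear_combination (-(α / 2 * p t 1) : ℂ) * Complex.I_sq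

end Jacobi

theorem one_add_cos_eq_zero_iff (θ : ℝ) :
    1 + cos θ = 0 ↔ ∃ k : ℤ, θ = (2 * k + 1) * π := by
  rw [add_eq_zero_iff_eq_neg', cos_eq_neg_one_iff]
  constructor <;> rintro ⟨k, hk⟩ <;> exact ⟨k, by linarith⟩

theorem det_half_one_add_rotation (θ : ℝ) :
    det !![(1 + cos θ) / 2, -sin θ / 2; sin θ / 2, (1 + cos θ) / 2] = (1 + cos θ) / 2 := by
  rw [det_fin_two_of]
  linear_combination (1 / 4 : ℝ) * sin_sq_add_cos_sq θ

theorem isUnit_half_one_add_rotation_iff (θ : ℝ) :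
    IsUnit !![(1 + cos θ) / 2, -sin θ / 2; sin θ / 2, (1 + cos θ) / 2] ↔
      ¬ ∃ k : ℤ, θ = (2 * k + 1) * π := by
  rw [isUnit_iff_isUnit_det, det_half_one_add_rotation, isUnit_iff_ne_zero, Ne,
    div_eq_zero_iff, one_add_cos_eq_zero_iff]
  norm_num

theorem stmt_18_general (x₀ y₀ u₀ v₀ α₀ : ℝ)
    (ξ ξ' η η' : ℝ)
    (A B : ℝ → Matrix (Fin 3) (Fin 3) ℝ) (R : Matrix (Fin 3) (Fin 3) ℝ)
    (hAm : ∀ t, A t = !![0, -α₀/2, 0;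
      α₀/2, 0, 0;
      -(η' - 3 * (η * Real.cos (α₀*t) + ξ * Real.sin (α₀*t))) / 4,
        (ξ' - 3 * (ξ * Real.cos (α₀*t)) - η * Real.sin (α₀*t)) / 4, 0])
    (hR : R = !![-α₀^2/4, 0, 0; 0, -α₀^2/4, 0; 0, 0, 0])
    (hBm : ∀ t, B t = !![1, 0,
        -(ξ' - ξ * Real.cos (α₀*t) + η * Real.sin (α₀*t)) / (2*α₀);
      0, 1, -(η' - η * Real.cos (α₀*t) - ξ * Real.sin (α₀*t)) / (2*α₀);
      -(ξ' - ξ * Real.cos (α₀*t) + η * Real.sin (α₀*t)) / (2*α₀),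
        -(η' - η * Real.cos (α₀*t) - ξ * Real.sin (α₀*t)) / (2*α₀),
        (4 * (u₀^2 + v₀^2) * (1 - Real.cos (α₀*t))
          + α₀^2 * (x₀^2 + y₀^2) * (1 + Real.cos (α₀*t))
          + 4 * α₀ * (x₀*u₀ + y₀*v₀) * Real.sin (α₀*t)) / (8*α₀^2)])
    (p x : ℝ → Fin 3 → ℝ)
    (hp : ∀ (t : ℝ) (i : Fin 3), HasDerivAt (fun s => p s i)
      (((-(A t)ᵀ).mulVec (p t) + R.mulVec (x t)) i) t)
    (hx : ∀ (t : ℝ) (i : Fin 3), HasDerivAt (fun s => x s i)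
      (((B t).mulVec (p t) + (A t).mulVec (x t)) i) t)
    (hp0 : p 0 = 0) :
    ∀ t : ℝ,
      x t 0 = ((1 + Real.cos (α₀*t))/2) * x 0 0 + (-(Real.sin (α₀*t))/2) * x 0 1 ∧
      x t 1 = (Real.sin (α₀*t)/2) * x 0 0 + ((1 + Real.cos (α₀*t))/2) * x 0 1 ∧
      Matrix.det !![(1 + Real.cos (α₀*t))/2, -(Real.sin (α₀*t))/2;
        Real.sin (α₀*t)/2, (1 + Real.cos (α₀*t))/2] = (1 + Real.cos (α₀*t))/2 ∧
      (IsUnit !![(1 + Real.cos (α₀*t))/2, -(Real.sin (α₀*t))/2;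
          Real.sin (α₀*t)/2, (1 + Real.cos (α₀*t))/2] ↔
        ¬ ∃ k : ℤ, α₀ * t = (2 * (k:ℝ) + 1) * Real.pi) := by
  have hA : ∀ s, ∃ a b : ℝ, A s = !![0, -α₀/2, 0; α₀/2, 0, 0; a, b, 0] :=
    fun s => ⟨_, _, hAm s⟩
  have hflow := eq_horizontalJacobiSolution (z₀ := horizontal (x 0))
    (hasDerivAt_horizontal hA (fun s => ⟨_, _, _, _, _, hBm s⟩) hR hp hx
      (jacobi_p_two_eq_zero hA hR hp hp0))
    (by simp [hp0, horizontal])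
  intro t
  obtain ⟨hx0, hx1⟩ := horizontal_eq_mul_iff.mp (congrArg (fun f => (f t).1) hflow)
  exact ⟨hx0, hx1, det_half_one_add_rotation _, isUnit_half_one_add_rotation_iff _⟩

/-- For the Heisenberg Jacobi equation in the standard coordinate frame, the
block of the fundamental matrix mapping the first two `x`-initial conditions to
the first two components of `x(t)` (for solutions with `p(0) = 0`) is
`[[(1+cos α₀t)/2, −sin(α₀t)/2],[sin(α₀t)/2, (1+cos α₀t)/2]]`; its determinant
is `(1+cos α₀t)/2`, so it is invertible iff `α₀t` is not an odd multiple of `π`. -/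
theorem stmt_18 (x₀ y₀ u₀ v₀ α₀ : ℝ) (hα : α₀ ≠ 0)
    (ξ ξ' η η' : ℝ)
    (hξ : ξ = u₀ - α₀ * y₀ / 2) (hξ' : ξ' = u₀ + α₀ * y₀ / 2)
    (hη : η = v₀ + α₀ * x₀ / 2) (hη' : η' = v₀ - α₀ * x₀ / 2)
    (A B : ℝ → Matrix (Fin 3) (Fin 3) ℝ) (R : Matrix (Fin 3) (Fin 3) ℝ)
    (hAm : ∀ t, A t = !![0, -α₀/2, 0;
      α₀/2, 0, 0;
      -(η' - 3 * (η * Real.cos (α₀*t) + ξ * Real.sin (α₀*t))) / 4,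
        (ξ' - 3 * (ξ * Real.cos (α₀*t)) - η * Real.sin (α₀*t)) / 4, 0])
    (hR : R = !![-α₀^2/4, 0, 0; 0, -α₀^2/4, 0; 0, 0, 0])
    (hBm : ∀ t, B t = !![1, 0,
        -(ξ' - ξ * Real.cos (α₀*t) + η * Real.sin (α₀*t)) / (2*α₀);
      0, 1, -(η' - η * Real.cos (α₀*t) - ξ * Real.sin (α₀*t)) / (2*α₀);
      -(ξ' - ξ * Real.cos (α₀*t) + η * Real.sin (α₀*t)) / (2*α₀),
        -(η' - η * Real.cos (α₀*t) - ξ * Real.sin (α₀*t)) / (2*α₀),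
        (4 * (u₀^2 + v₀^2) * (1 - Real.cos (α₀*t))
          + α₀^2 * (x₀^2 + y₀^2) * (1 + Real.cos (α₀*t))
          + 4 * α₀ * (x₀*u₀ + y₀*v₀) * Real.sin (α₀*t)) / (8*α₀^2)])
    (p x : ℝ → Fin 3 → ℝ)
    (hp : ∀ (t : ℝ) (i : Fin 3), HasDerivAt (fun s => p s i)
      (((-(A t)ᵀ).mulVec (p t) + R.mulVec (x t)) i) t)
    (hx : ∀ (t : ℝ) (i : Fin 3), HasDerivAt (fun s => x s i)
      (((B t).mulVec (p t) + (A t).mulVec (x t)) i) t)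
    (hp0 : p 0 = 0) :
    ∀ t : ℝ,
      x t 0 = ((1 + Real.cos (α₀*t))/2) * x 0 0 + (-(Real.sin (α₀*t))/2) * x 0 1 ∧
      x t 1 = (Real.sin (α₀*t)/2) * x 0 0 + ((1 + Real.cos (α₀*t))/2) * x 0 1 ∧
      Matrix.det !![(1 + Real.cos (α₀*t))/2, -(Real.sin (α₀*t))/2;
        Real.sin (α₀*t)/2, (1 + Real.cos (α₀*t))/2] = (1 + Real.cos (α₀*t))/2 ∧
      (IsUnit !![(1 + Real.cos (α₀*t))/2, -(Real.sin (α₀*t))/2;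
          Real.sin (α₀*t)/2, (1 + Real.cos (α₀*t))/2] ↔
        ¬ ∃ k : ℤ, α₀ * t = (2 * (k:ℝ) + 1) * Real.pi) :=
  stmt_18_general x₀ y₀ u₀ v₀ α₀ ξ ξ' η η' A B R hAm hR hBm p x hp hx hp0
end
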